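/- Let (S, R) be a proper bipartition of V_A and (S', R') be a proper bipartition of V_B. Then q_S ≥ p_{S'} + r (coordinatewise) holds if and only if (S ∪ S', R ∪ R') is a feasible interval-constrained cut of G. -/
import Mathlib


open Finset

variable {V : Type*} [Fintype V] [DecidableEq V]

/-- `nbr G A v = |N_A(v)|`, the number of neighbors of `v` lying in `A`. -/
def nbr (G : SimpleGraph V) [DecidableRel G.Adj] (A : Finset V) (v : V) : ℕ :=
  (G.neighborFinset v ∩ A).card

/-- A feasible interval-constrained cut: a proper bipartition `(V_L, V_R)` of `V` satisfying
the vertex-specific interval degree constraints. -/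
def IsFeasibleCut (G : SimpleGraph V) [DecidableRel G.Adj]
    (a' a'' b' b'' c' c'' d' d'' : V → ℕ) (VL VR : Finset V) : Prop :=
  Disjoint VL VR ∧ VL ∪ VR = Finset.univ ∧ VL.Nonempty ∧ VR.Nonempty ∧
    (∀ v ∈ VL, (a' v ≤ nbr G VL v ∧ nbr G VL v ≤ a'' v) ∧
      (b' v ≤ nbr G VR v ∧ nbr G VR v ≤ b'' v)) ∧
    (∀ v ∈ VR, (c' v ≤ nbr G VR v ∧ nbr G VR v ≤ c'' v) ∧
      (d' v ≤ nbr G VL v ∧ nbr G VL v ≤ d'' v))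

/-- The constraint vector `r` (8 entries per vertex). -/
def rvec (a' a'' b' b'' c' c'' d' d'' : V → ℕ) (v : V) : Fin 8 → ℤ :=
  ![(a' v : ℤ), -(a'' v : ℤ), (b' v : ℤ), -(b'' v : ℤ),
    (c' v : ℤ), -(c'' v : ℤ), (d' v : ℤ), -(d'' v : ℤ)]

/-- The query vector `q_S` (8 entries per vertex) associated to a bipartition `(S, R)` of
`V_A`; vertices outside `S ∪ R` are exactly those of `V_B`. -/
def qvec8 (G : SimpleGraph V) [DecidableRel G.Adj] (n : ℕ) (S R : Finset V) (v : V) :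
    Fin 8 → ℤ :=
  if v ∈ S then
    ![(nbr G S v : ℤ), -(nbr G S v : ℤ), (nbr G R v : ℤ), -(nbr G R v : ℤ),
      (2 * n : ℤ), (2 * n : ℤ), (2 * n : ℤ), (2 * n : ℤ)]
  else if v ∈ R then
    ![(2 * n : ℤ), (2 * n : ℤ), (2 * n : ℤ), (2 * n : ℤ),
      (nbr G R v : ℤ), -(nbr G R v : ℤ), (nbr G S v : ℤ), -(nbr G S v : ℤ)]
  else
    ![(nbr G S v : ℤ), -(nbr G S v : ℤ), (nbr G R v : ℤ), -(nbr G R v : ℤ),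
      (nbr G R v : ℤ), -(nbr G R v : ℤ), (nbr G S v : ℤ), -(nbr G S v : ℤ)]

/-- The data vector `p_{S'}` (8 entries per vertex) associated to a bipartition `(S', R')`
of `V_B`; vertices outside `S' ∪ R'` are exactly those of `V_A`. -/
def pvec8 (G : SimpleGraph V) [DecidableRel G.Adj] (n : ℕ) (S' R' : Finset V) (v : V) :
    Fin 8 → ℤ :=
  if v ∈ S' then
    ![-(nbr G S' v : ℤ), (nbr G S' v : ℤ), -(nbr G R' v : ℤ), (nbr G R' v : ℤ),
      -(2 * n : ℤ), -(2 * n : ℤ), -(2 * n : ℤ), -(2 * n : ℤ)]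
  else if v ∈ R' then
    ![-(2 * n : ℤ), -(2 * n : ℤ), -(2 * n : ℤ), -(2 * n : ℤ),
      -(nbr G R' v : ℤ), (nbr G R' v : ℤ), -(nbr G S' v : ℤ), (nbr G S' v : ℤ)]
  else
    ![-(nbr G S' v : ℤ), (nbr G S' v : ℤ), -(nbr G R' v : ℤ), (nbr G R' v : ℤ),
      -(nbr G R' v : ℤ), (nbr G R' v : ℤ), -(nbr G S' v : ℤ), (nbr G S' v : ℤ)]

lemma vec8_five {α : Type*} (a b c d e f g h : α) : ![a,b,c,d,e,f,g,h] 5 = f := rfl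
lemma vec8_six {α : Type*} (a b c d e f g h : α) : ![a,b,c,d,e,f,g,h] 6 = g := rfl
lemma vec8_seven {α : Type*} (a b c d e f g h : α) : ![a,b,c,d,e,f,g,h] 7 = h := rfl

lemma nbr_union (G : SimpleGraph V) [DecidableRel G.Adj] {A B : Finset V}
    (h : Disjoint A B) (v : V) :
    nbr G (A ∪ B) v = nbr G A v + nbr G B v := by
  unfold nbr
  rw [inter_union_distrib_left,
    card_union_of_disjoint (h.mono inter_subset_right inter_subset_right)]

lemma nbr_le_card (G : SimpleGraph V) [DecidableRel G.Adj] (A : Finset V) (v : V) :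
    nbr G A v ≤ Fintype.card V :=
  (card_le_card inter_subset_right).trans (card_le_univ A)

/-- for proper bipartitions `(S, R)` of `V_A` and `(S', R')` of `V_B`,
coordinatewise dominance `q_S ≥ p_{S'} + r` holds iff `(S ∪ S', R ∪ R')` is a feasible
interval-constrained cut of `G`. -/
theorem stmt_7 (G : SimpleGraph V) [DecidableRel G.Adj]
    (n : ℕ) (hn : n = Fintype.card V)
    (a' a'' b' b'' c' c'' d' d'' : V → ℕ)
    (ha' : ∀ v, a' v ≤ n) (ha'' : ∀ v, a'' v ≤ n) (hb' : ∀ v, b' v ≤ n) (hb'' : ∀ v, b'' v ≤ n)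
    (hc' : ∀ v, c' v ≤ n) (hc'' : ∀ v, c'' v ≤ n) (hd' : ∀ v, d' v ≤ n) (hd'' : ∀ v, d'' v ≤ n)
    (VA VB : Finset V) (hABdisj : Disjoint VA VB) (hABuniv : VA ∪ VB = Finset.univ)
    (S R : Finset V) (hSR : Disjoint S R) (hSRu : S ∪ R = VA)
    (hS : S.Nonempty) (hR : R.Nonempty)
    (S' R' : Finset V) (hSR' : Disjoint S' R') (hSRu' : S' ∪ R' = VB)
    (hS' : S'.Nonempty) (hR' : R'.Nonempty) :
    (∀ v : V, ∀ k : Fin 8,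
        pvec8 G n S' R' v k + rvec a' a'' b' b'' c' c'' d' d'' v k ≤ qvec8 G n S R v k) ↔
      IsFeasibleCut G a' a'' b' b'' c' c'' d' d'' (S ∪ S') (R ∪ R') := by
  classical
  have hSVA : S ⊆ VA := by rw [← hSRu]; exact subset_union_left
  have hRVA : R ⊆ VA := by rw [← hSRu]; exact subset_union_right
  have hS'VB : S' ⊆ VB := by rw [← hSRu']; exact subset_union_left
  have hR'VB : R' ⊆ VB := by rw [← hSRu']; exact subset_union_right
  have dSS' : Disjoint S S' := hABdisj.mono hSVA hS'VB
  have dSR' : Disjoint S R' := hABdisj.mono hSVA hR'VB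
  have dRS' : Disjoint R S' := hABdisj.mono hRVA hS'VB
  have dRR' : Disjoint R R' := hABdisj.mono hRVA hR'VB
  have hVL : Disjoint (S ∪ S') (R ∪ R') := by
    simp only [disjoint_union_left, disjoint_union_right]
    exact ⟨⟨hSR, dRS'.symm⟩, dSR', hSR'⟩
  have hUniv : (S ∪ S') ∪ (R ∪ R') = Finset.univ := by
    rw [union_union_union_comm, hSRu, hSRu', hABuniv]
  have eL : ∀ v, nbr G (S ∪ S') v = nbr G S v + nbr G S' v := nbr_union G dSS'
  have eR : ∀ v, nbr G (R ∪ R') v = nbr G R v + nbr G R' v := nbr_union G dRR'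
  have bS : ∀ v, nbr G S v ≤ n := fun v => hn ▸ nbr_le_card G S v
  have bR : ∀ v, nbr G R v ≤ n := fun v => hn ▸ nbr_le_card G R v
  have bS' : ∀ v, nbr G S' v ≤ n := fun v => hn ▸ nbr_le_card G S' v
  have bR' : ∀ v, nbr G R' v ≤ n := fun v => hn ▸ nbr_le_card G R' v
  constructor
  · intro H
    refine ⟨hVL, hUniv, hS.mono subset_union_left, hR.mono subset_union_left, ?_, ?_⟩
    · intro v hv
      rw [eL v, eR v]
      rcases mem_union.mp hv with hvS | hvS'
      · have hnS' : v ∉ S' := fun h => disjoint_left.mp dSS' hvS h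
        have hnR' : v ∉ R' := fun h => disjoint_left.mp dSR' hvS h
        have h0 := H v 0; have h1 := H v 1; have h2 := H v 2; have h3 := H v 3
        simp [qvec8, pvec8, rvec, vec8_five, vec8_six, vec8_seven, hvS, hnS', hnR'] at h0 h1 h2 h3
        refine ⟨⟨?_, ?_⟩, ?_, ?_⟩ <;> omega
      · have hnS : v ∉ S := fun h => disjoint_left.mp dSS' h hvS'
        have hnR : v ∉ R := fun h => disjoint_right.mp dRS' hvS' h
        have h0 := H v 0; have h1 := H v 1; have h2 := H v 2; have h3 := H v 3
        simp [qvec8, pvec8, rvec, vec8_five, vec8_six, vec8_seven, hvS', hnS, hnR] at h0 h1 h2 h3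
        refine ⟨⟨?_, ?_⟩, ?_, ?_⟩ <;> omega
    · intro v hv
      rw [eL v, eR v]
      rcases mem_union.mp hv with hvR | hvR'
      · have hnS : v ∉ S := fun h => disjoint_left.mp hSR h hvR
        have hnS' : v ∉ S' := fun h => disjoint_left.mp dRS' hvR h
        have hnR' : v ∉ R' := fun h => disjoint_left.mp dRR' hvR h
        have h4 := H v 4; have h5 := H v 5; have h6 := H v 6; have h7 := H v 7
        simp [qvec8, pvec8, rvec, vec8_five, vec8_six, vec8_seven, hvR, hnS, hnS', hnR'] at h4 h5 h6 h7
        refine ⟨⟨?_, ?_⟩, ?_, ?_⟩ <;> omega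
      · have hnS : v ∉ S := fun h => disjoint_left.mp dSR' h hvR'
        have hnR : v ∉ R := fun h => disjoint_left.mp dRR' h hvR'
        have hnS' : v ∉ S' := fun h => disjoint_right.mp hSR' hvR' h
        have h4 := H v 4; have h5 := H v 5; have h6 := H v 6; have h7 := H v 7
        simp [qvec8, pvec8, rvec, vec8_five, vec8_six, vec8_seven, hvR', hnS, hnR, hnS'] at h4 h5 h6 h7
        refine ⟨⟨?_, ?_⟩, ?_, ?_⟩ <;> omega
  · rintro ⟨-, -, -, -, hL, hRc⟩ v k
    have b1 := bS v; have b2 := bR v; have b3 := bS' v; have b4 := bR' v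
    have c1 := ha' v; have c2 := ha'' v; have c3 := hb' v; have c4 := hb'' v
    have c5 := hc' v; have c6 := hc'' v; have c7 := hd' v; have c8 := hd'' v
    have hvAB : v ∈ VA ∪ VB := hABuniv ▸ mem_univ v
    rcases mem_union.mp hvAB with hvA | hvB
    · rcases mem_union.mp (by rw [hSRu]; exact hvA : v ∈ S ∪ R) with hvS | hvR
      · have hnR : v ∉ R := disjoint_left.mp hSR hvS
        have hnS' : v ∉ S' := disjoint_left.mp dSS' hvS
        have hnR' : v ∉ R' := disjoint_left.mp dSR' hvS
        have hf := hL v (mem_union_left _ hvS)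
        rw [eL v, eR v] at hf
        fin_cases k <;> simp [qvec8, pvec8, rvec, vec8_five, vec8_six, vec8_seven, hvS, hnS', hnR'] <;> omega
      · have hnS : v ∉ S := disjoint_right.mp hSR hvR
        have hnS' : v ∉ S' := disjoint_left.mp dRS' hvR
        have hnR' : v ∉ R' := disjoint_left.mp dRR' hvR
        have hf := hRc v (mem_union_left _ hvR)
        rw [eL v, eR v] at hf
        fin_cases k <;> simp [qvec8, pvec8, rvec, vec8_five, vec8_six, vec8_seven, hvR, hnS, hnS', hnR'] <;> omega
    · rcases mem_union.mp (by rw [hSRu']; exact hvB : v ∈ S' ∪ R') with hvS' | hvR'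
      · have hnS : v ∉ S := disjoint_right.mp dSS' hvS'
        have hnR : v ∉ R := disjoint_right.mp dRS' hvS'
        have hnR' : v ∉ R' := disjoint_left.mp hSR' hvS'
        have hf := hL v (mem_union_right _ hvS')
        rw [eL v, eR v] at hf
        fin_cases k <;> simp [qvec8, pvec8, rvec, vec8_five, vec8_six, vec8_seven, hvS', hnS, hnR] <;> omega
      · have hnS : v ∉ S := disjoint_right.mp dSR' hvR'
        have hnR : v ∉ R := disjoint_right.mp dRR' hvR'
        have hnS' : v ∉ S' := disjoint_right.mp hSR' hvR'
        have hf := hRc v (mem_union_right _ hvR')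
        rw [eL v, eR v] at hf
        fin_cases k <;> simp [qvec8, pvec8, rvec, vec8_five, vec8_six, vec8_seven, hvR', hnS, hnR, hnS'] <;> omega
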